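/- arXiv:math/0305237 — 4 statements merged into one kernel-verified Lean document; each statement's English description precedes it below -/
import Mathlib

section
/- Let n > 1, let U ⊂ ℝⁿ be a nonempty open O(n)-invariant set, I = {|x|² : x ∈ U}, and let θ : I → (0,∞) be of class C². Set ρ(x+iy) = |y|² − θ(|x|²) and Σ = {x+iy : x ∈ U, |y|² = θ(|x|²)}. Then L_ρ(p;v) > 0 for every p ∈ Σ and every nonzero v ∈ T_p^ℂΣ (i.e. the domain D₋ = {x+iy : x ∈ U, |y|² < θ(|x|²)} is strongly pseudoconvex along Σ) if and only if for every s ∈ I one has θ'(s) < 1 and 2 s θ(s) θ''(s) < (1 − θ'(s)) (s θ'(s)² + θ(s)). -/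
open Complex Set

/-- The Levi form of a `C²` function `ρ` at `p` in direction `v`:
`4 L_ρ(p;v) = H_p(v,v) + H_p(iv,iv)` where `H_p` is the second real Fréchet derivative. -/
noncomputable def leviForm {E : Type*} [NormedAddCommGroup E] [NormedSpace ℂ E]
    (ρ : E → ℝ) (p v : E) : ℝ :=
  (iteratedFDeriv ℝ 2 ρ p ![v, v]
    + iteratedFDeriv ℝ 2 ρ p ![Complex.I • v, Complex.I • v]) / 4

/-- The complex tangent space `T_p^ℂΣ = {v : dρ_p(v) = 0 and dρ_p(iv) = 0}`. -/
def complexTangent {E : Type*} [NormedAddCommGroup E] [NormedSpace ℂ E]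
    (ρ : E → ℝ) (p : E) : Set E :=
  {v | fderiv ℝ ρ p v = 0 ∧ fderiv ℝ ρ p (Complex.I • v) = 0}

/-- `ρ(x+iy) = |y|² - θ(|x|²)`. -/
noncomputable def rho (n : ℕ) (θ : ℝ → ℝ) : (Fin n → ℂ) → ℝ :=
  fun z => (∑ j, (z j).im ^ 2) - θ (∑ j, (z j).re ^ 2)

/-- The hypersurface `Σ = {x+iy : x ∈ U, |y|² = θ(|x|²)}`. -/
def SigmaSet (n : ℕ) (U : Set (Fin n → ℝ)) (θ : ℝ → ℝ) : Set (Fin n → ℂ) :=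
  {z | (fun j => (z j).re) ∈ U ∧ (∑ j, (z j).im ^ 2) = θ (∑ j, (z j).re ^ 2)}

/-
In coordinates `p = x + iy`, `v = a + ib` and with `θ', θ''` taken at `s = |x|²`, the Levi form of
`ρ` is `(1 - θ')(|a|² + |b|²)/2 - θ''((x⬝a)² + (x⬝b)²)`, and `v` is complex tangent at `p` iff
`y⬝b = θ'(x⬝a)` and `y⬝a = -θ'(x⬝b)`. On `Σ` we have `|y|² = θ`; adding the Gram determinants of
`(x, y, a)` and `(x, y, b)`, whose cross terms cancel on the complex tangent space, gives
`(θ + sθ'²)((x⬝a)² + (x⬝b)²) ≤ sθ(|a|² + |b|²)`, and the two inequalities then make the Levi form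
positive. Conversely, after rotating `x` to `√s e₀` by `O(n)`-invariance, the inequalities are the
positivity of the Levi form on `e₁` at `y = √θ e₀` and on `e₀ + i(θ'√s/√θ) e₁` at `y = √θ e₁`.
-/

lemma gram_det_nonneg {ι : Type*} [Fintype ι] (x y a : ι → ℝ) :
    0 ≤ (x ⬝ᵥ x) * (y ⬝ᵥ y) * (a ⬝ᵥ a) + 2 * (x ⬝ᵥ y) * (x ⬝ᵥ a) * (y ⬝ᵥ a)
        - (x ⬝ᵥ x) * (y ⬝ᵥ a) ^ 2 - (y ⬝ᵥ y) * (x ⬝ᵥ a) ^ 2 - (a ⬝ᵥ a) * (x ⬝ᵥ y) ^ 2 := by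
  have h :=
    (Matrix.posSemidef_conjTranspose_mul_self (Matrix.of fun i k => ![x, y, a] k i)).det_nonneg
  simp only [Matrix.det_fin_three, Matrix.conjTranspose_apply, Matrix.mul_apply, Matrix.of_apply,
    star_trivial, Fin.isValue, Matrix.cons_val_zero, Matrix.cons_val_one, Matrix.cons_val,
    ← dotProduct.eq_1, dotProduct_comm a, dotProduct_comm y x] at h
  linarith

section SumOfSquares

variable {E ι : Type*} [NormedAddCommGroup E] [NormedSpace ℝ E] [Fintype ι]

noncomputable def fderivSumSq (ℓ : ι → E →L[ℝ] ℝ) : E →L[ℝ] E →L[ℝ] ℝ :=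
  ∑ j, (2 : ℝ) • (ℓ j).smulRight (ℓ j)

lemma fderivSumSq_apply (ℓ : ι → E →L[ℝ] ℝ) (z w : E) :
    fderivSumSq ℓ z w = 2 * ∑ j, ℓ j z * ℓ j w := by
  simp [fderivSumSq, Finset.mul_sum]

lemma hasFDerivAt_sum_sq (ℓ : ι → E →L[ℝ] ℝ) (z : E) :
    HasFDerivAt (fun z => ∑ j, ℓ j z ^ 2) (fderivSumSq ℓ z) z := by
  refine (HasFDerivAt.fun_sum fun j _ => (ℓ j).hasFDerivAt.pow 2).congr_fderiv ?_
  ext w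
  simp [fderivSumSq_apply, Finset.mul_sum, mul_assoc]

end SumOfSquares

section ReIm

variable {ι : Type*}

def reVec (z : ι → ℂ) : ι → ℝ := fun j => (z j).re

def imVec (z : ι → ℂ) : ι → ℝ := fun j => (z j).im

def ofReIm (x y : ι → ℝ) : ι → ℂ := fun j => ⟨x j, y j⟩

@[simp] lemma reVec_ofReIm (x y : ι → ℝ) : reVec (ofReIm x y) = x := rfl

@[simp] lemma imVec_ofReIm (x y : ι → ℝ) : imVec (ofReIm x y) = y := rfl

@[simp] lemma reVec_I_smul (v : ι → ℂ) : reVec (I • v) = -imVec v := by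
  ext j; simp [reVec, imVec]

@[simp] lemma imVec_I_smul (v : ι → ℂ) : imVec (I • v) = reVec v := by
  ext j; simp [reVec, imVec]

lemma sum_sq_eq_dotProduct [Fintype ι] (x : ι → ℝ) : ∑ j, x j ^ 2 = x ⬝ᵥ x := by
  simp [dotProduct, sq]

lemma dotProduct_reVec_add_imVec_pos [Fintype ι] {v : ι → ℂ} (hv : v ≠ 0) :
    0 < reVec v ⬝ᵥ reVec v + imVec v ⬝ᵥ imVec v := by
  have hre : 0 ≤ reVec v ⬝ᵥ reVec v := by simpa using dotProduct_self_star_nonneg (reVec v)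
  have him : 0 ≤ imVec v ⬝ᵥ imVec v := by simpa using dotProduct_self_star_nonneg (imVec v)
  refine lt_of_le_of_ne (add_nonneg hre him) fun h => hv ?_
  have hre0 := dotProduct_self_eq_zero.1 (by linarith : reVec v ⬝ᵥ reVec v = 0)
  have him0 := dotProduct_self_eq_zero.1 (by linarith : imVec v ⬝ᵥ imVec v = 0)
  funext j
  exact Complex.ext (congrFun hre0 j) (congrFun him0 j)

end ReIm

section Rho

variable {n : ℕ} {θ : ℝ → ℝ}

noncomputable def reCoord (j : Fin n) : (Fin n → ℂ) →L[ℝ] ℝ :=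
  reCLM.comp (ContinuousLinearMap.proj j)

noncomputable def imCoord (j : Fin n) : (Fin n → ℂ) →L[ℝ] ℝ :=
  imCLM.comp (ContinuousLinearMap.proj j)

lemma fderivSumSq_reCoord_apply (z w : Fin n → ℂ) :
    fderivSumSq reCoord z w = 2 * (reVec z ⬝ᵥ reVec w) := by
  simp [fderivSumSq_apply, reCoord, reVec, dotProduct]

lemma fderivSumSq_imCoord_apply (z w : Fin n → ℂ) :
    fderivSumSq imCoord z w = 2 * (imVec z ⬝ᵥ imVec w) := by
  simp [fderivSumSq_apply, imCoord, imVec, dotProduct]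

lemma hasFDerivAt_rho {z : Fin n → ℂ} (hθ : DifferentiableAt ℝ θ (∑ j, (z j).re ^ 2)) :
    HasFDerivAt (rho n θ)
      (fderivSumSq imCoord z - deriv θ (∑ j, (z j).re ^ 2) • fderivSumSq reCoord z) z :=
  (hasFDerivAt_sum_sq imCoord z).sub
    (hθ.hasDerivAt.comp_hasFDerivAt z (hasFDerivAt_sum_sq reCoord z))

variable {V : Set ℝ}

lemma fderiv_fderiv_rho (hV : IsOpen V) (hθ : ContDiffOn ℝ 2 θ V) {p : Fin n → ℂ}
    (hp : ∑ j, (p j).re ^ 2 ∈ V) :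
    fderiv ℝ (fderiv ℝ (rho n θ)) p
      = fderivSumSq imCoord - (deriv θ (∑ j, (p j).re ^ 2) • fderivSumSq reCoord
          + (deriv (deriv θ) (∑ j, (p j).re ^ 2) • fderivSumSq reCoord p).smulRight
              (fderivSumSq reCoord p)) := by
  have hθ' : DifferentiableAt ℝ (deriv θ) (∑ j, (p j).re ^ 2) :=
    ((hθ.deriv_of_isOpen (m := 1) hV (by norm_num)).contDiffAt (hV.mem_nhds hp)).differentiableAt
      (by norm_num)
  have hfderiv : fderiv ℝ (rho n θ) =ᶠ[nhds p]
      fun z => fderivSumSq imCoord z - deriv θ (∑ j, (z j).re ^ 2) • fderivSumSq reCoord z := by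
    have hopen : IsOpen {z : Fin n → ℂ | ∑ j, (z j).re ^ 2 ∈ V} :=
      hV.preimage (by fun_prop)
    filter_upwards [hopen.mem_nhds hp] with z hz
    exact (hasFDerivAt_rho
      ((hθ.contDiffAt (hV.mem_nhds hz)).differentiableAt (by norm_num))).fderiv
  rw [hfderiv.fderiv_eq]
  exact ((fderivSumSq imCoord).hasFDerivAt.sub
    ((hθ'.hasDerivAt.comp_hasFDerivAt p (hasFDerivAt_sum_sq reCoord p)).smul
      (fderivSumSq reCoord).hasFDerivAt)).fderiv

lemma iteratedFDeriv_two_rho (hV : IsOpen V) (hθ : ContDiffOn ℝ 2 θ V) {p : Fin n → ℂ}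
    (hp : ∑ j, (p j).re ^ 2 ∈ V) (v w : Fin n → ℂ) :
    iteratedFDeriv ℝ 2 (rho n θ) p ![v, w]
      = 2 * (imVec v ⬝ᵥ imVec w) - 2 * deriv θ (∑ j, (p j).re ^ 2) * (reVec v ⬝ᵥ reVec w)
        - 4 * deriv (deriv θ) (∑ j, (p j).re ^ 2) * (reVec p ⬝ᵥ reVec v)
            * (reVec p ⬝ᵥ reVec w) := by
  rw [iteratedFDeriv_two_apply, fderiv_fderiv_rho hV hθ hp]
  simp only [Matrix.cons_val_zero, Matrix.cons_val_one, sub_apply, add_apply, smul_apply,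
    ContinuousLinearMap.smulRight_apply, fderivSumSq_reCoord_apply, fderivSumSq_imCoord_apply,
    smul_eq_mul]
  ring

lemma leviForm_rho (hV : IsOpen V) (hθ : ContDiffOn ℝ 2 θ V) {p : Fin n → ℂ}
    (hp : ∑ j, (p j).re ^ 2 ∈ V) (v : Fin n → ℂ) :
    leviForm (rho n θ) p v
      = (1 - deriv θ (∑ j, (p j).re ^ 2)) * (reVec v ⬝ᵥ reVec v + imVec v ⬝ᵥ imVec v) / 2
        - deriv (deriv θ) (∑ j, (p j).re ^ 2)
            * ((reVec p ⬝ᵥ reVec v) ^ 2 + (reVec p ⬝ᵥ imVec v) ^ 2) := by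
  rw [leviForm, iteratedFDeriv_two_rho hV hθ hp, iteratedFDeriv_two_rho hV hθ hp]
  simp only [reVec_I_smul, imVec_I_smul, neg_dotProduct, dotProduct_neg]
  ring

lemma mem_complexTangent_rho_iff {p v : Fin n → ℂ}
    (hθ : DifferentiableAt ℝ θ (∑ j, (p j).re ^ 2)) :
    v ∈ complexTangent (rho n θ) p ↔
      imVec p ⬝ᵥ imVec v = deriv θ (∑ j, (p j).re ^ 2) * (reVec p ⬝ᵥ reVec v) ∧
      imVec p ⬝ᵥ reVec v = -(deriv θ (∑ j, (p j).re ^ 2) * (reVec p ⬝ᵥ imVec v)) := by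
  simp only [complexTangent, Set.mem_ofPred_eq, (hasFDerivAt_rho hθ).fderiv,
    sub_apply, smul_apply, smul_eq_mul,
    fderivSumSq_reCoord_apply, fderivSumSq_imCoord_apply, reVec_I_smul, imVec_I_smul,
    dotProduct_neg]
  constructor <;> rintro ⟨h₁, h₂⟩ <;> constructor <;> linarith

end Rho

lemma sq_dotProduct_add_sq_dotProduct_le {ι : Type*} [Fintype ι] {x y a b : ι → ℝ} {k : ℝ}
    (hb : y ⬝ᵥ b = k * (x ⬝ᵥ a)) (ha : y ⬝ᵥ a = -(k * (x ⬝ᵥ b))) :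
    (y ⬝ᵥ y + (x ⬝ᵥ x) * k ^ 2) * ((x ⬝ᵥ a) ^ 2 + (x ⬝ᵥ b) ^ 2)
      ≤ (x ⬝ᵥ x) * (y ⬝ᵥ y) * (a ⬝ᵥ a + b ⬝ᵥ b) := by
  have hGa := gram_det_nonneg x y a
  have hGb := gram_det_nonneg x y b
  rw [ha] at hGa
  rw [hb] at hGb
  have hab : 0 ≤ a ⬝ᵥ a + b ⬝ᵥ b := by
    simpa using add_nonneg (dotProduct_self_star_nonneg a) (dotProduct_self_star_nonneg b)
  linarith [mul_nonneg (sq_nonneg (x ⬝ᵥ y)) hab]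

section Pseudoconvexity

variable {n : ℕ} {θ : ℝ → ℝ} {V : Set ℝ}

lemma leviForm_rho_pos (hV : IsOpen V) (hθ : ContDiffOn ℝ 2 θ V) {p v : Fin n → ℂ} {s : ℝ}
    (hs : ∑ j, (p j).re ^ 2 = s) (hsV : s ∈ V) (hpy : ∑ j, (p j).im ^ 2 = θ s)
    (hθs : 0 < θ s) (h₁ : deriv θ s < 1)
    (h₂ : 2 * s * θ s * deriv (deriv θ) s < (1 - deriv θ s) * (s * deriv θ s ^ 2 + θ s))
    (hv : v ∈ complexTangent (rho n θ) p) (hv₀ : v ≠ 0) :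
    0 < leviForm (rho n θ) p v := by
  subst hs
  have hθ' := (hθ.contDiffAt (hV.mem_nhds hsV)).differentiableAt (by norm_num)
  obtain ⟨hb, ha⟩ := (mem_complexTangent_rho_iff hθ').1 hv
  have hkey := sq_dotProduct_add_sq_dotProduct_le hb ha
  have hx : reVec p ⬝ᵥ reVec p = ∑ j, (p j).re ^ 2 := (sum_sq_eq_dotProduct _).symm
  have hy : imVec p ⬝ᵥ imVec p = θ (∑ j, (p j).re ^ 2) := (sum_sq_eq_dotProduct _).symm.trans hpy
  rw [hx, hy] at hkey
  rw [leviForm_rho hV hθ hsV]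
  have hA := dotProduct_reVec_add_imVec_pos hv₀
  have hs₀ : 0 ≤ ∑ j, (p j).re ^ 2 := by positivity
  set s := ∑ j, (p j).re ^ 2
  set P := (reVec p ⬝ᵥ reVec v) ^ 2 + (reVec p ⬝ᵥ imVec v) ^ 2
  have hP : 0 ≤ P := by positivity
  rcases le_or_gt (deriv (deriv θ) s) 0 with h₃ | h₃
  · nlinarith [mul_nonneg (neg_nonneg.2 h₃) hP, mul_pos (sub_pos.2 h₁) hA]
  · have : 0 < θ s + s * deriv θ s ^ 2 := by positivity
    nlinarith [mul_le_mul_of_nonneg_left hkey h₃.le, mul_pos hA (sub_pos.2 h₂)]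

lemma deriv_lt_one_of_leviForm_rho_pos (hV : IsOpen V) (hθ : ContDiffOn ℝ 2 θ V)
    {U : Set (Fin n → ℝ)} {j₀ j₁ : Fin n} (hj : j₀ ≠ j₁) {s : ℝ} (hs : 0 ≤ s) (hsV : s ∈ V)
    (hθs : 0 < θ s) (hU : Pi.single j₀ √s ∈ U)
    (h : ∀ p ∈ SigmaSet n U θ, ∀ v ∈ complexTangent (rho n θ) p, v ≠ 0 →
      0 < leviForm (rho n θ) p v) :
    deriv θ s < 1 := by
  set p := ofReIm (Pi.single j₀ √s) (Pi.single j₀ √(θ s))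
  set v : Fin n → ℂ := ofReIm (Pi.single j₁ 1) 0
  have hps : ∑ j, (p j).re ^ 2 = s := by
    simp [p, ofReIm, Pi.single_apply, hs]
  have hpU : p ∈ SigmaSet n U θ := ⟨hU, by simp [p, ofReIm, Pi.single_apply, hs, hθs.le]⟩
  have hθ' := (hθ.contDiffAt (hV.mem_nhds hsV)).differentiableAt (by norm_num)
  have hv : v ∈ complexTangent (rho n θ) p := by
    rw [mem_complexTangent_rho_iff (hps ▸ hθ'), hps]
    simp [p, v, hj]
  have hv₀ : v ≠ 0 := fun h0 => by simpa [v, ofReIm] using congrArg (fun z => (z j₁).re) h0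
  have hL := h p hpU v hv hv₀
  rw [leviForm_rho hV hθ (hps ▸ hsV), hps] at hL
  simpa [p, v, hj] using hL

lemma deriv_deriv_bound_of_leviForm_rho_pos (hV : IsOpen V) (hθ : ContDiffOn ℝ 2 θ V)
    {U : Set (Fin n → ℝ)} {j₀ j₁ : Fin n} (hj : j₀ ≠ j₁) {s : ℝ} (hs : 0 ≤ s) (hsV : s ∈ V)
    (hθs : 0 < θ s) (hU : Pi.single j₀ √s ∈ U)
    (h : ∀ p ∈ SigmaSet n U θ, ∀ v ∈ complexTangent (rho n θ) p, v ≠ 0 →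
      0 < leviForm (rho n θ) p v) :
    2 * s * θ s * deriv (deriv θ) s < (1 - deriv θ s) * (s * deriv θ s ^ 2 + θ s) := by
  set c := deriv θ s * √s / √(θ s)
  set p := ofReIm (Pi.single j₀ √s) (Pi.single j₁ √(θ s))
  set v : Fin n → ℂ := ofReIm (Pi.single j₀ 1) (Pi.single j₁ c)
  have hps : ∑ j, (p j).re ^ 2 = s := by
    simp [p, ofReIm, Pi.single_apply, hs]
  have hpU : p ∈ SigmaSet n U θ := ⟨hU, by simp [p, ofReIm, Pi.single_apply, hs, hθs.le]⟩
  have hθ' := (hθ.contDiffAt (hV.mem_nhds hsV)).differentiableAt (by norm_num)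
  have hc : √(θ s) * c = deriv θ s * √s := by
    simp only [c]
    field_simp
  have hv : v ∈ complexTangent (rho n θ) p := by
    rw [mem_complexTangent_rho_iff (hps ▸ hθ'), hps]
    simp [p, v, hj, hj.symm, hc]
  have hv₀ : v ≠ 0 := fun h0 => by simpa [v, ofReIm] using congrArg (fun z => (z j₀).re) h0
  have hL := h p hpU v hv hv₀
  rw [leviForm_rho hV hθ (hps ▸ hsV), hps] at hL
  simp only [p, v, reVec_ofReIm, imVec_ofReIm, dotProduct_single, Pi.single_eq_same,
    Pi.single_eq_of_ne hj.symm, Real.sq_sqrt hs, mul_one, zero_mul, ne_eq,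
    OfNat.ofNat_ne_zero, not_false_eq_true, zero_pow, add_zero, sub_pos] at hL
  have hc₂ : θ s * (c * c) = s * deriv θ s ^ 2 := by
    have := congrArg (· ^ 2) hc
    simp only [mul_pow, Real.sq_sqrt hθs.le, Real.sq_sqrt hs] at this
    linarith
  calc 2 * s * θ s * deriv (deriv θ) s = 2 * θ s * (deriv (deriv θ) s * s) := by ring
    _ < 2 * θ s * ((1 - deriv θ s) * (1 + c * c) / 2) := by gcongr
    _ = (1 - deriv θ s) * (θ s * (c * c) + θ s) := by ring
    _ = (1 - deriv θ s) * (s * deriv θ s ^ 2 + θ s) := by rw [hc₂]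

end Pseudoconvexity

theorem stmt_0_general {n : ℕ} (hn : 1 < n)
    (U : Set (Fin n → ℝ))
    (hUinv : ∀ x x' : Fin n → ℝ, x ∈ U → (∑ j, x' j ^ 2) = (∑ j, x j ^ 2) → x' ∈ U)
    (θ : ℝ → ℝ) (V : Set ℝ) (hV : IsOpen V)
    (hIV : {s : ℝ | ∃ x ∈ U, s = ∑ j, x j ^ 2} ⊆ V)
    (hθ : ContDiffOn ℝ 2 θ V)
    (hθpos : ∀ s ∈ {s : ℝ | ∃ x ∈ U, s = ∑ j, x j ^ 2}, 0 < θ s) :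
    (∀ p ∈ SigmaSet n U θ, ∀ v ∈ complexTangent (rho n θ) p, v ≠ 0 →
        0 < leviForm (rho n θ) p v)
    ↔ (∀ s ∈ {s : ℝ | ∃ x ∈ U, s = ∑ j, x j ^ 2},
        deriv θ s < 1 ∧
        2 * s * θ s * deriv (deriv θ) s <
          (1 - deriv θ s) * (s * (deriv θ s) ^ 2 + θ s)) := by
  constructor
  · rintro h s ⟨x, hxU, rfl⟩
    have hsI : ∑ j, x j ^ 2 ∈ {s : ℝ | ∃ x ∈ U, s = ∑ j, x j ^ 2} := ⟨x, hxU, rfl⟩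
    have hj : (⟨0, by omega⟩ : Fin n) ≠ ⟨1, hn⟩ := by simp [Fin.ext_iff]
    have hs : 0 ≤ ∑ j, x j ^ 2 := by positivity
    have hU : Pi.single (⟨0, by omega⟩ : Fin n) √(∑ j, x j ^ 2) ∈ U :=
      hUinv x _ hxU (by simp [Pi.single_apply, hs])
    exact ⟨deriv_lt_one_of_leviForm_rho_pos hV hθ hj hs (hIV hsI) (hθpos _ hsI) hU h,
      deriv_deriv_bound_of_leviForm_rho_pos hV hθ hj hs (hIV hsI) (hθpos _ hsI) hU h⟩
  · rintro h p ⟨hpU, hpy⟩ v hv hv₀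
    have hsI : ∑ j, (p j).re ^ 2 ∈ {s : ℝ | ∃ x ∈ U, s = ∑ j, x j ^ 2} := ⟨_, hpU, rfl⟩
    obtain ⟨h₁, h₂⟩ := h _ hsI
    exact leviForm_rho_pos hV hθ rfl (hIV hsI) hpy (hθpos _ hsI) h₁ h₂ hv hv₀

theorem stmt_0 {n : ℕ} (hn : 1 < n)
    (U : Set (Fin n → ℝ)) (hUne : U.Nonempty) (hUopen : IsOpen U)
    (hUinv : ∀ x x' : Fin n → ℝ, x ∈ U → (∑ j, x' j ^ 2) = (∑ j, x j ^ 2) → x' ∈ U)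
    (θ : ℝ → ℝ) (V : Set ℝ) (hV : IsOpen V)
    (hIV : {s : ℝ | ∃ x ∈ U, s = ∑ j, x j ^ 2} ⊆ V)
    (hθ : ContDiffOn ℝ 2 θ V)
    (hθpos : ∀ s ∈ {s : ℝ | ∃ x ∈ U, s = ∑ j, x j ^ 2}, 0 < θ s) :
    (∀ p ∈ SigmaSet n U θ, ∀ v ∈ complexTangent (rho n θ) p, v ≠ 0 →
        0 < leviForm (rho n θ) p v)
    ↔ (∀ s ∈ {s : ℝ | ∃ x ∈ U, s = ∑ j, x j ^ 2},
        deriv θ s < 1 ∧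
        2 * s * θ s * deriv (deriv θ) s <
          (1 - deriv θ s) * (s * (deriv θ s) ^ 2 + θ s)) :=
  stmt_0_general hn U hUinv θ V hV hIV hθ hθpos
end

section
/- Let n > 1, let U ⊂ ℝⁿ∖{0} be an open O(n)-invariant set, I = {|x| : x ∈ U}, and let f : I → (0,∞) be of class C². Set ρ(x+iy) = |y|² − f(|x|)² and Σ = {x+iy : x ∈ U, |y| = f(|x|)}. If for every t ∈ I one has f(t) f'(t)/t > 1 and f(t) ( f''(t) + f'(t)³/t ) > 1, then L_ρ(p;v) < 0 for every p ∈ Σ and every nonzero v ∈ T_p^ℂΣ (i.e. the domain D₊ = {x+iy : x ∈ U, |y| > f(|x|)} is strongly pseudoconvex along Σ). -/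
open Complex Set

/-- `ρ(x+iy) = |y|² - f(|x|)²`. -/
noncomputable def rhoF (n : ℕ) (f : ℝ → ℝ) : (Fin n → ℂ) → ℝ :=
  fun z => (∑ j, (z j).im ^ 2) - (f (Real.sqrt (∑ j, (z j).re ^ 2))) ^ 2

/-- The hypersurface `Σ = {x+iy : x ∈ U, |y| = f(|x|)}`. -/
def SigmaSetF (n : ℕ) (U : Set (Fin n → ℝ)) (f : ℝ → ℝ) : Set (Fin n → ℂ) :=
  {z | (fun j => (z j).re) ∈ U ∧
    Real.sqrt (∑ j, (z j).im ^ 2) = f (Real.sqrt (∑ j, (z j).re ^ 2))}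


/-!
Restrict `ρ` to the real lines `t ↦ p + t v`: the Levi form becomes a sum of second derivatives
of one-variable functions. Writing `p = x + iy`, `v = a + ib`, `r = |x|`, `F = f r` and
`k = F f'(r) / r`, one gets
`4 L_ρ(p;v) = 2 (1 - k) |v|² - 2 (f'² + F f'' - k) (⟨x,a⟩² + ⟨x,b⟩²) / r²`.
Tangency says that `a + ib` is Hermitian-orthogonal to `y + ikx` in `ℂⁿ`, and Cauchy–Schwarz
in the orthogonal complement of `y + ikx` gives `(⟨x,a⟩² + ⟨x,b⟩²) (F² + k² r²) ≤ |v|² r² F²`.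
The first hypothesis `k > 1` makes the first term negative; when `f'² + F f'' - k < 0`, the
bound turns the whole expression into a multiple of `1 - F (f'' + f'³ / r) < 0`.
-/

open Filter Topology
open scoped InnerProductSpace RealInnerProductSpace

section SecondDerivatives

variable {𝕜 F : Type*} [NontriviallyNormedField 𝕜] [NormedAddCommGroup F] [NormedSpace 𝕜 F]

theorem iteratedFDeriv_two_apply_eq_deriv_deriv {E : Type*} [NormedAddCommGroup E]
    [NormedSpace 𝕜 E] {ρ : E → F} {p : E} (hρ : ContDiffAt 𝕜 2 ρ p) (v : E) :
    iteratedFDeriv 𝕜 2 ρ p ![v, v] = deriv (deriv fun t : 𝕜 => ρ (p + t • v)) 0 := by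
  have hline : ∀ t : 𝕜, HasDerivAt (fun s : 𝕜 => p + s • v) v t := fun t => by
    simpa using ((hasDerivAt_id t).smul_const v).const_add p
  have hderiv : (fun t : 𝕜 => fderiv 𝕜 ρ (p + t • v) v) =ᶠ[𝓝 0]
      deriv fun t : 𝕜 => ρ (p + t • v) := by
    have hcont : Tendsto (fun t : 𝕜 => p + t • v) (𝓝 0) (𝓝 p) := by
      simpa using (hline 0).continuousAt.tendsto
    filter_upwards [hcont.eventually (hρ.eventually (by simp))] with t ht
    exact ((ht.differentiableAt (by simp)).hasFDerivAt.comp_hasDerivAt t (hline t)).deriv.symm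
  have hρ' : HasFDerivAt (fderiv 𝕜 ρ) (fderiv 𝕜 (fderiv 𝕜 ρ) p) (p + (0 : 𝕜) • v) := by
    simpa using ((hρ.fderiv_right (m := 1) le_rfl).differentiableAt one_ne_zero).hasFDerivAt
  rw [iteratedFDeriv_two_apply, ← hderiv.deriv_eq]
  exact (((ContinuousLinearMap.apply 𝕜 F v).hasFDerivAt.comp_hasDerivAt 0
    (hρ'.comp_hasDerivAt 0 (hline 0))).deriv).symm

theorem deriv_deriv_comp {h q : 𝕜 → 𝕜} {t : 𝕜} (hh : ContDiffAt 𝕜 2 h (q t))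
    (hq : ContDiffAt 𝕜 2 q t) :
    deriv (deriv (h ∘ q)) t =
      deriv (deriv h) (q t) * deriv q t ^ 2 + deriv h (q t) * deriv (deriv q) t := by
  have hchain : (deriv h ∘ q) * deriv q =ᶠ[𝓝 t] deriv (h ∘ q) := by
    filter_upwards [hq.continuousAt.eventually (hh.eventually (by simp)),
      hq.eventually (by simp)] with s hhs hqs
    exact (deriv_comp s (hhs.differentiableAt (by simp)) (hqs.differentiableAt (by simp))).symm
  have hh' : HasDerivAt (deriv h) (deriv (deriv h) (q t)) (q t) :=
    ((hh.derivWithin (m := 1) le_rfl).differentiableAt one_ne_zero).hasDerivAt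
  have hq' : HasDerivAt (deriv q) (deriv (deriv q) t) t :=
    ((hq.derivWithin (m := 1) le_rfl).differentiableAt one_ne_zero).hasDerivAt
  rw [← hchain.deriv_eq, ((hh'.comp t (hq.differentiableAt (by simp)).hasDerivAt).mul hq').deriv,
    Function.comp_apply]
  ring

theorem deriv_deriv_sub {g h : 𝕜 → F} {t : 𝕜} (hg : ContDiffAt 𝕜 2 g t)
    (hh : ContDiffAt 𝕜 2 h t) :
    deriv (deriv (g - h)) t = deriv (deriv g) t - deriv (deriv h) t := by
  have hsub : deriv g - deriv h =ᶠ[𝓝 t] deriv (g - h) := by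
    filter_upwards [hg.eventually (by simp), hh.eventually (by simp)] with s hgs hhs
    exact (deriv_sub (hgs.differentiableAt (by simp)) (hhs.differentiableAt (by simp))).symm
  rw [← hsub.deriv_eq]
  exact deriv_sub ((hg.derivWithin (m := 1) le_rfl).differentiableAt one_ne_zero)
    ((hh.derivWithin (m := 1) le_rfl).differentiableAt one_ne_zero)

theorem deriv_deriv_sq {q : 𝕜 → 𝕜} {t : 𝕜} (hq : ContDiffAt 𝕜 2 q t) :
    deriv (deriv fun s => q s ^ 2) t = 2 * deriv q t ^ 2 + 2 * q t * deriv (deriv q) t := by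
  have hsq : deriv (fun s : 𝕜 => s ^ 2) = fun s => 2 * s := by ext s; simp
  rw [show (fun s => q s ^ 2) = (fun s : 𝕜 => s ^ 2) ∘ q from rfl, deriv_deriv_comp (by fun_prop) hq,
    hsq, deriv_const_mul_id']

end SecondDerivatives

section Line

variable {E : Type*} [NormedAddCommGroup E] [InnerProductSpace ℝ E]

def tubeFun (f : ℝ → ℝ) (x y : E) : ℝ := ‖y‖ ^ 2 - f ‖x‖ ^ 2

variable (x a : E)

theorem hasDerivAt_norm_add_smul_sq (t : ℝ) :
    HasDerivAt (fun s : ℝ => ‖x + s • a‖ ^ 2) (2 * ⟪x + t • a, a⟫) t :=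
  HasDerivAt.norm_sq (by simpa using ((hasDerivAt_id t).smul_const a).const_add x)

theorem deriv_deriv_norm_add_smul_sq :
    deriv (deriv fun s : ℝ => ‖x + s • a‖ ^ 2) 0 = 2 * ‖a‖ ^ 2 := by
  have hderiv : deriv (fun s : ℝ => ‖x + s • a‖ ^ 2) = fun t => 2 * ⟪x, a⟫ + 2 * ‖a‖ ^ 2 * t := by
    ext t
    rw [(hasDerivAt_norm_add_smul_sq x a t).deriv, inner_add_left, real_inner_smul_left,
      real_inner_self_eq_norm_sq]
    ring
  rw [hderiv]
  simp

variable {x}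

theorem contDiffAt_norm_add_smul (hx : x ≠ 0) :
    ContDiffAt ℝ 2 (fun t : ℝ => ‖x + t • a‖) 0 := by
  have hline : ContDiff ℝ 2 fun t : ℝ => x + t • a := by fun_prop
  exact (contDiffAt_norm ℝ (by simpa using hx)).comp 0 hline.contDiffAt

theorem deriv_norm_add_smul (hx : x ≠ 0) :
    deriv (fun t : ℝ => ‖x + t • a‖) 0 = ⟪x, a⟫ / ‖x‖ := by
  have hsq := ((contDiffAt_norm_add_smul a hx).differentiableAt (by simp)).hasDerivAt.fun_pow 2
  have h := hsq.unique (by simpa using hasDerivAt_norm_add_smul_sq x a 0)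
  field_simp [norm_ne_zero_iff.2 hx]
  simp only [Nat.cast_ofNat, zero_smul, add_zero, Nat.add_one_sub_one, pow_one] at h
  linarith

theorem deriv_deriv_norm_add_smul (hx : x ≠ 0) :
    deriv (deriv fun t : ℝ => ‖x + t • a‖) 0 = (‖a‖ ^ 2 - (⟪x, a⟫ / ‖x‖) ^ 2) / ‖x‖ := by
  have h := deriv_deriv_sq (contDiffAt_norm_add_smul a hx)
  rw [deriv_deriv_norm_add_smul_sq, deriv_norm_add_smul a hx, zero_smul, add_zero] at h
  rw [eq_div_iff (norm_ne_zero_iff.2 hx)]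
  linarith

variable {f : ℝ → ℝ} (y b : E)

theorem deriv_tubeFun_line (hx : x ≠ 0) (hf : ContDiffAt ℝ 2 f ‖x‖) :
    deriv (fun t : ℝ => tubeFun f (x + t • a) (y + t • b)) 0 =
      2 * ⟪y, b⟫ - 2 * f ‖x‖ * deriv f ‖x‖ * (⟪x, a⟫ / ‖x‖) := by
  have hR := (contDiffAt_norm_add_smul a hx).differentiableAt (by simp)
  have hfR : HasDerivAt (fun t : ℝ => f ‖x + t • a‖) (deriv f ‖x‖ * (⟪x, a⟫ / ‖x‖)) 0 := by
    rw [← deriv_norm_add_smul a hx]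
    exact (hf.differentiableAt (by simp)).hasDerivAt.comp_of_eq 0 hR.hasDerivAt (by simp)
  simp only [tubeFun]
  rw [((hasDerivAt_norm_add_smul_sq y b 0).fun_sub (hfR.fun_pow 2)).deriv]
  simp only [zero_smul, add_zero, Nat.cast_ofNat, Nat.add_one_sub_one, pow_one]
  ring

theorem deriv_deriv_tubeFun_line (hx : x ≠ 0) (hf : ContDiffAt ℝ 2 f ‖x‖) :
    deriv (deriv fun t : ℝ => tubeFun f (x + t • a) (y + t • b)) 0 =
      2 * ‖b‖ ^ 2 - 2 * (deriv f ‖x‖ ^ 2 + f ‖x‖ * deriv (deriv f) ‖x‖) * (⟪x, a⟫ / ‖x‖) ^ 2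
        - 2 * f ‖x‖ * deriv f ‖x‖ * ((‖a‖ ^ 2 - (⟪x, a⟫ / ‖x‖) ^ 2) / ‖x‖) := by
  have hR := contDiffAt_norm_add_smul a hx
  have hfx : ContDiffAt ℝ 2 f ‖x + (0 : ℝ) • a‖ := by simpa using hf
  have hΦ' : deriv (fun s => f s ^ 2) ‖x‖ = 2 * f ‖x‖ * deriv f ‖x‖ := by
    rw [((hf.differentiableAt (by simp)).hasDerivAt.fun_pow 2).deriv]
    ring
  have hΦR := deriv_deriv_comp (h := fun s => f s ^ 2) (hfx.pow 2) hR
  simp only [Function.comp_def, add_zero, zero_smul] at hΦR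
  have hN : ContDiffAt ℝ 2 (fun t : ℝ => ‖y + t • b‖ ^ 2) 0 :=
    ((contDiff_norm_sq ℝ).comp (by fun_prop : ContDiff ℝ 2 fun t : ℝ => y + t • b)).contDiffAt
  have hsub := deriv_deriv_sub hN ((hfx.pow 2).comp 0 hR)
  simp only [Function.comp_def] at hsub
  rw [show (fun t : ℝ => tubeFun f (x + t • a) (y + t • b)) =
    (fun t : ℝ => ‖y + t • b‖ ^ 2) - fun t => f ‖x + t • a‖ ^ 2 from rfl, hsub, hΦR,
    deriv_deriv_norm_add_smul_sq, deriv_deriv_sq hf, hΦ', deriv_norm_add_smul a hx,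
    deriv_deriv_norm_add_smul a hx]
  ring

end Line

theorem norm_inner_sq_mul_le_of_inner_eq_zero {𝕜 E : Type*} [RCLike 𝕜] [NormedAddCommGroup E]
    [InnerProductSpace 𝕜 E] {v w : E} (hvw : ⟪w, v⟫_𝕜 = 0) (x : E) :
    ‖⟪x, v⟫_𝕜‖ ^ 2 * ‖w‖ ^ 2 ≤ ‖v‖ ^ 2 * (‖x‖ ^ 2 * ‖w‖ ^ 2 - ‖⟪w, x⟫_𝕜‖ ^ 2) := by
  rcases eq_or_ne w 0 with rfl | hw
  · simp
  set c : 𝕜 := ((‖w‖ ^ 2 : ℝ) : 𝕜)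
  -- `x'` is `‖w‖²` times the component of `x` orthogonal to `w`.
  set x' : E := c • x - ⟪w, x⟫_𝕜 • w
  have hx'v : ⟪x', v⟫_𝕜 = c * ⟪x, v⟫_𝕜 := by
    simp [x', c, inner_sub_left, inner_smul_left, hvw]
  have hx'w : ⟪x', w⟫_𝕜 = 0 := by
    simp only [x', c, inner_sub_left, inner_smul_left, RCLike.conj_ofReal,
      inner_self_eq_norm_sq_to_K]
    rw [← inner_conj_symm w x, RCLike.conj_conj]
    push_cast
    ring
  have hx'x : ⟪x', x⟫_𝕜 = c * ‖x‖ ^ 2 - ‖⟪w, x⟫_𝕜‖ ^ 2 := by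
    simp only [x', c, inner_sub_left, inner_smul_left, RCLike.conj_ofReal,
      inner_self_eq_norm_sq_to_K, RCLike.conj_mul]
  have hx' : ‖x'‖ ^ 2 = ‖w‖ ^ 2 * (‖x‖ ^ 2 * ‖w‖ ^ 2 - ‖⟪w, x⟫_𝕜‖ ^ 2) := by
    have h : ⟪x', x'⟫_𝕜 = c * ⟪x', x⟫_𝕜 := by
      calc ⟪x', x'⟫_𝕜 = ⟪x', c • x - ⟪w, x⟫_𝕜 • w⟫_𝕜 := rfl
        _ = c * ⟪x', x⟫_𝕜 := by
          rw [inner_sub_right, inner_smul_right, inner_smul_right, hx'w, mul_zero, sub_zero]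
    rw [← inner_self_eq_norm_sq (𝕜 := 𝕜), h, hx'x]
    simp only [c]
    norm_cast
    ring
  have hcs := norm_inner_le_norm (𝕜 := 𝕜) x' v
  rw [hx'v, norm_mul] at hcs
  have hw2 : 0 < ‖w‖ ^ 2 := by positivity
  have : ‖c‖ = ‖w‖ ^ 2 := by simp [c]
  rw [this] at hcs
  have hsq := pow_le_pow_left₀ (by positivity) hcs 2
  rw [mul_pow, mul_pow, hx'] at hsq
  nlinarith

namespace EuclideanSpace

variable {ι : Type*} [Fintype ι]

noncomputable def complexify (u w : EuclideanSpace ℝ ι) : EuclideanSpace ℂ ι :=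
  WithLp.toLp 2 fun j => ⟨u j, w j⟩

theorem inner_complexify (u w u' w' : EuclideanSpace ℝ ι) :
    ⟪complexify u w, complexify u' w'⟫_ℂ = ⟨⟪u, u'⟫ + ⟪w, w'⟫, ⟪u, w'⟫ - ⟪w, u'⟫⟩ := by
  simp only [complexify, PiLp.inner_apply]
  apply Complex.ext
  · simp only [RCLike.inner_apply, Complex.re_sum, Complex.mul_re, Complex.conj_re, Complex.conj_im,
      mul_comm, neg_mul, sub_neg_eq_add, Finset.sum_add_distrib, Real.ringHom_apply]
  · simp only [RCLike.inner_apply, Complex.im_sum, Complex.mul_im, Complex.conj_im,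
      Complex.conj_re, mul_comm, neg_mul, Finset.sum_add_distrib, Finset.sum_neg_distrib,
      Real.ringHom_apply]
    ring

theorem norm_complexify_sq (u w : EuclideanSpace ℝ ι) :
    ‖complexify u w‖ ^ 2 = ‖u‖ ^ 2 + ‖w‖ ^ 2 := by
  have h := congrArg Complex.re (inner_complexify u w u w)
  rw [inner_self_eq_norm_sq_to_K] at h
  simp only [real_inner_self_eq_norm_sq] at h
  exact_mod_cast h

theorem inner_sq_add_inner_sq_mul_le {x y a b : EuclideanSpace ℝ ι} {k : ℝ}
    (ha : ⟪y, a⟫ = -(k * ⟪x, b⟫)) (hb : ⟪y, b⟫ = k * ⟪x, a⟫) :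
    (⟪x, a⟫ ^ 2 + ⟪x, b⟫ ^ 2) * (‖y‖ ^ 2 + k ^ 2 * ‖x‖ ^ 2) ≤
      (‖a‖ ^ 2 + ‖b‖ ^ 2) * (‖x‖ ^ 2 * ‖y‖ ^ 2) := by
  have hWV : ⟪complexify y (k • x), complexify a b⟫_ℂ = 0 := by
    rw [inner_complexify, real_inner_smul_left, real_inner_smul_left, ha, hb]
    apply Complex.ext <;> simp
  have h := norm_inner_sq_mul_le_of_inner_eq_zero hWV (complexify x 0)
  simp only [inner_complexify, norm_complexify_sq, inner_zero_left, inner_zero_right,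
    real_inner_smul_left, norm_zero, norm_smul, real_inner_self_eq_norm_sq, Complex.sq_norm,
    Complex.normSq_mk, Real.norm_eq_abs, mul_pow, sq_abs] at h
  have hS : 0 ≤ ‖a‖ ^ 2 + ‖b‖ ^ 2 := by positivity
  nlinarith [mul_nonneg hS (sq_nonneg ⟪y, x⟫)]

end EuclideanSpace

theorem levi_numerator_neg {F f1 f2 r A B a2 b2 : ℝ} (hr : 0 < r) (hk : 1 < F * f1 / r)
    (h2 : 1 < F * (f2 + f1 ^ 3 / r)) (hS : 0 < a2 + b2)
    (hcs : (A ^ 2 + B ^ 2) * (F ^ 2 + (F * f1 / r) ^ 2 * r ^ 2) ≤ (a2 + b2) * (r ^ 2 * F ^ 2)) :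
    2 * b2 - 2 * (f1 ^ 2 + F * f2) * (A / r) ^ 2 - 2 * F * f1 * ((a2 - (A / r) ^ 2) / r)
      + (2 * a2 - 2 * (f1 ^ 2 + F * f2) * (B / r) ^ 2 - 2 * F * f1 * ((b2 - (B / r) ^ 2) / r))
      < 0 := by
  set k := F * f1 / r
  set P := (A / r) ^ 2 + (B / r) ^ 2
  set M := f1 ^ 2 + F * f2 - k
  have hF : F ≠ 0 := by rintro rfl; simp only [zero_mul, zero_div, k] at hk; linarith
  have hP : 0 ≤ P := by positivity
  have hexpr : 2 * b2 - 2 * (f1 ^ 2 + F * f2) * (A / r) ^ 2 - 2 * F * f1 * ((a2 - (A / r) ^ 2) / r)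
      + (2 * a2 - 2 * (f1 ^ 2 + F * f2) * (B / r) ^ 2 - 2 * F * f1 * ((b2 - (B / r) ^ 2) / r))
      = 2 * (a2 + b2) * (1 - k) - 2 * M * P := by
    simp only [k, M, P]; field_simp; ring
  have hcs' : P * (F ^ 2 + k ^ 2 * r ^ 2) ≤ (a2 + b2) * F ^ 2 := by
    have hP' : A ^ 2 + B ^ 2 = P * r ^ 2 := by simp only [P]; field_simp
    rw [hP'] at hcs
    nlinarith [sq_pos_of_pos hr]
  have hcurv : (1 - k) * (F ^ 2 + k ^ 2 * r ^ 2) - M * F ^ 2 =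
      F ^ 2 * (1 - F * (f2 + f1 ^ 3 / r)) := by
    simp only [k, M]; field_simp; ring
  rw [hexpr]
  rcases le_or_gt 0 M with hM | hM
  · nlinarith [mul_nonneg hM hP]
  · have hF2 : 0 < F ^ 2 := by positivity
    have hden : 0 < F ^ 2 + k ^ 2 * r ^ 2 := by positivity
    nlinarith [mul_le_mul_of_nonneg_left hcs' (neg_nonneg.2 hM.le), mul_pos hS hF2]

noncomputable def rePart (n : ℕ) : (Fin n → ℂ) →L[ℝ] EuclideanSpace ℝ (Fin n) :=
  (EuclideanSpace.equiv (Fin n) ℝ).symm.toContinuousLinearMap.comp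
    (ContinuousLinearMap.pi fun j => Complex.reCLM.comp (ContinuousLinearMap.proj j))

noncomputable def imPart (n : ℕ) : (Fin n → ℂ) →L[ℝ] EuclideanSpace ℝ (Fin n) :=
  (EuclideanSpace.equiv (Fin n) ℝ).symm.toContinuousLinearMap.comp
    (ContinuousLinearMap.pi fun j => Complex.imCLM.comp (ContinuousLinearMap.proj j))

section Tube

variable {n : ℕ}

@[simp] theorem rePart_apply (z : Fin n → ℂ) (j : Fin n) : rePart n z j = (z j).re := rfl

@[simp] theorem imPart_apply (z : Fin n → ℂ) (j : Fin n) : imPart n z j = (z j).im := rfl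

theorem rePart_I_smul (v : Fin n → ℂ) : rePart n (Complex.I • v) = -imPart n v := by
  ext j; simp

theorem imPart_I_smul (v : Fin n → ℂ) : imPart n (Complex.I • v) = rePart n v := by
  ext j; simp

theorem norm_rePart_sq_add_norm_imPart_sq_pos {v : Fin n → ℂ} (hv : v ≠ 0) :
    0 < ‖rePart n v‖ ^ 2 + ‖imPart n v‖ ^ 2 := by
  contrapose! hv
  have h := le_antisymm hv (by positivity)
  rw [add_eq_zero_iff_of_nonneg (by positivity) (by positivity), sq_eq_zero_iff, sq_eq_zero_iff,
    norm_eq_zero, norm_eq_zero] at h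
  funext j
  apply Complex.ext
  · simpa using congrArg (· j) h.1
  · simpa using congrArg (· j) h.2

theorem sqrt_sum_sq_eq_norm (u : EuclideanSpace ℝ (Fin n)) : √(∑ j, u j ^ 2) = ‖u‖ := by
  simp [EuclideanSpace.norm_eq]

theorem rhoF_eq_tubeFun (f : ℝ → ℝ) (z : Fin n → ℂ) :
    rhoF n f z = tubeFun f (rePart n z) (imPart n z) := by
  rw [tubeFun, ← sqrt_sum_sq_eq_norm, ← sqrt_sum_sq_eq_norm, Real.sq_sqrt (by positivity)]
  rfl

theorem rhoF_comp_add_smul (f : ℝ → ℝ) (p w : Fin n → ℂ) :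
    (fun t : ℝ => rhoF n f (p + t • w)) =
      fun t => tubeFun f (rePart n p + t • rePart n w) (imPart n p + t • imPart n w) := by
  ext t
  rw [rhoF_eq_tubeFun, map_add, map_add, map_smul, map_smul]

section Point

variable {f : ℝ → ℝ} {p : Fin n → ℂ} (hp : rePart n p ≠ 0) (hf : ContDiffAt ℝ 2 f ‖rePart n p‖)
include hp hf

theorem contDiffAt_rhoF : ContDiffAt ℝ 2 (rhoF n f) p := by
  rw [show rhoF n f = _ from funext (rhoF_eq_tubeFun f)]
  have hre : ContDiffAt ℝ 2 (fun z => ‖rePart n z‖) p :=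
    (contDiffAt_norm ℝ hp).comp p (rePart n).contDiff.contDiffAt
  exact ((contDiff_norm_sq ℝ).comp (imPart n).contDiff).contDiffAt.sub ((hf.comp p hre).pow 2)

theorem fderiv_rhoF_apply (w : Fin n → ℂ) :
    fderiv ℝ (rhoF n f) p w = 2 * ⟪imPart n p, imPart n w⟫
      - 2 * f ‖rePart n p‖ * deriv f ‖rePart n p‖ * (⟪rePart n p, rePart n w⟫ / ‖rePart n p‖) := by
  rw [← ((contDiffAt_rhoF hp hf).differentiableAt (by simp)).lineDeriv_eq_fderiv, lineDeriv,
    rhoF_comp_add_smul, deriv_tubeFun_line _ _ _ hp hf]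

theorem iteratedFDeriv_two_rhoF_apply (w : Fin n → ℂ) :
    iteratedFDeriv ℝ 2 (rhoF n f) p ![w, w] = 2 * ‖imPart n w‖ ^ 2
      - 2 * (deriv f ‖rePart n p‖ ^ 2 + f ‖rePart n p‖ * deriv (deriv f) ‖rePart n p‖)
        * (⟪rePart n p, rePart n w⟫ / ‖rePart n p‖) ^ 2
      - 2 * f ‖rePart n p‖ * deriv f ‖rePart n p‖
        * ((‖rePart n w‖ ^ 2 - (⟪rePart n p, rePart n w⟫ / ‖rePart n p‖) ^ 2) / ‖rePart n p‖) := by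
  rw [iteratedFDeriv_two_apply_eq_deriv_deriv (contDiffAt_rhoF hp hf), rhoF_comp_add_smul,
    deriv_deriv_tubeFun_line _ _ _ hp hf]

end Point

end Tube

theorem stmt_6_general {n : ℕ}
    (U : Set (Fin n → ℝ))
    (f : ℝ → ℝ) (V : Set ℝ) (hV : IsOpen V)
    (hIV : {t : ℝ | ∃ x ∈ U, t = Real.sqrt (∑ j, x j ^ 2)} ⊆ V)
    (hf : ContDiffOn ℝ 2 f V)
    (hineq : ∀ t ∈ {t : ℝ | ∃ x ∈ U, t = Real.sqrt (∑ j, x j ^ 2)},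
      1 < f t * deriv f t / t ∧
      1 < f t * (deriv (deriv f) t + (deriv f t) ^ 3 / t)) :
    ∀ p ∈ SigmaSetF n U f, ∀ v ∈ complexTangent (rhoF n f) p, v ≠ 0 →
      leviForm (rhoF n f) p v < 0 := by
  rintro p ⟨hpU, hpSigma⟩ v ⟨hv, hIv⟩ hv0
  have hxI : ‖rePart n p‖ ∈ {t : ℝ | ∃ x ∈ U, t = Real.sqrt (∑ j, x j ^ 2)} :=
    ⟨_, hpU, (sqrt_sum_sq_eq_norm _).symm⟩
  obtain ⟨hk, hcurv⟩ := hineq _ hxI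
  -- At `‖rePart n p‖ = 0` the first inequality reads `1 < 0` (division by zero is zero).
  have hx : rePart n p ≠ 0 := by rintro hx; simp only [hx, norm_zero, div_zero] at hk; linarith
  have hfx : ContDiffAt ℝ 2 f ‖rePart n p‖ := hf.contDiffAt (hV.mem_nhds (hIV hxI))
  have hy : ‖imPart n p‖ = f ‖rePart n p‖ := by
    rw [← sqrt_sum_sq_eq_norm, ← sqrt_sum_sq_eq_norm]
    exact hpSigma
  simp only [fderiv_rhoF_apply hx hfx, rePart_I_smul, imPart_I_smul, inner_neg_right] at hv hIv
  have hcs := EuclideanSpace.inner_sq_add_inner_sq_mul_le (a := rePart n v) (b := imPart n v)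
    (k := f ‖rePart n p‖ * deriv f ‖rePart n p‖ / ‖rePart n p‖)
    (by field_simp at hIv ⊢; linarith) (by field_simp at hv ⊢; linarith)
  rw [hy] at hcs
  rw [leviForm, iteratedFDeriv_two_rhoF_apply hx hfx, iteratedFDeriv_two_rhoF_apply hx hfx,
    rePart_I_smul, imPart_I_smul, inner_neg_right, norm_neg, neg_div, neg_sq]
  exact div_neg_of_neg_of_pos (levi_numerator_neg (norm_pos_iff.2 hx) hk hcurv
    (norm_rePart_sq_add_norm_imPart_sq_pos hv0) hcs) four_pos

theorem stmt_6 {n : ℕ} (hn : 1 < n)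
    (U : Set (Fin n → ℝ)) (hUne : U.Nonempty) (hUopen : IsOpen U)
    (hU0 : (0 : Fin n → ℝ) ∉ U)
    (hUinv : ∀ x x' : Fin n → ℝ, x ∈ U → (∑ j, x' j ^ 2) = (∑ j, x j ^ 2) → x' ∈ U)
    (f : ℝ → ℝ) (V : Set ℝ) (hV : IsOpen V)
    (hIV : {t : ℝ | ∃ x ∈ U, t = Real.sqrt (∑ j, x j ^ 2)} ⊆ V)
    (hf : ContDiffOn ℝ 2 f V)
    (hfpos : ∀ t ∈ {t : ℝ | ∃ x ∈ U, t = Real.sqrt (∑ j, x j ^ 2)}, 0 < f t)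
    (hineq : ∀ t ∈ {t : ℝ | ∃ x ∈ U, t = Real.sqrt (∑ j, x j ^ 2)},
      1 < f t * deriv f t / t ∧
      1 < f t * (deriv (deriv f) t + (deriv f t) ^ 3 / t)) :
    ∀ p ∈ SigmaSetF n U f, ∀ v ∈ complexTangent (rhoF n f) p, v ≠ 0 →
      leviForm (rhoF n f) p v < 0 :=
  stmt_6_general U f V hV hIV hf hineq
end

section
/- Let n > 1, let U ⊂ ℝⁿ∖{0} be an open O(n)-invariant set, I = {|x| : x ∈ U}, and let f : I → (0,∞) be of class C² satisfying the differential equation f(t) ( f''(t) + f'(t)³/t ) = 1 for all t ∈ I. Set ρ(x+iy) = |y|² − f(|x|)² and Σ = {x+iy : x ∈ U, |y| = f(|x|)}. If f(t) f'(t)/t < 1 for all t ∈ I, then L_ρ(p;v) ≥ 0 for every p ∈ Σ and every v ∈ T_p^ℂΣ (D₋ = {|y| < f(|x|)} is weakly pseudoconvex along Σ); if f(t) f'(t)/t > 1 for all t ∈ I, then L_ρ(p;v) ≤ 0 for every p ∈ Σ and every v ∈ T_p^ℂΣ (D₊ = {|y| > f(|x|)} is weakly pseudoconvex along Σ). -/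
open Complex Set

/-!
Write `ρ = Q_im - φ ∘ Q_re` with `Q_re(z) = |x|²`, `Q_im(z) = |y|²` and `φ(s) = f(√s)²`; the Hessian
of such a function is explicit. With `t = |x|`, `a = Re v`, `b = Im v` it gives
`4 L_ρ(p;v) = 2 (1 - f f'/t) (|v|² - (1 + f'²)(⟨x,a⟩² + ⟨x,b⟩²)/t²)`,
the differential equation being exactly what makes the coefficient of the radial term a multiple of
`1 - f f'/t`. For `v ∈ T_p^ℂΣ`, Cauchy–Schwarz between `y` and the components of `a`, `b` orthogonal
to `x` shows that the second factor is nonnegative, so `L_ρ(p;v)` has the sign of `1 - f f'/t`.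
-/

open Filter Topology

theorem sum_sq_pos_of_ne_zero {ι : Type*} [Fintype ι] {x : ι → ℝ} (hx : x ≠ 0) :
    0 < ∑ j, x j ^ 2 := by
  obtain ⟨j, hj⟩ := Function.ne_iff.1 hx
  exact Finset.sum_pos' (fun j _ => sq_nonneg _) ⟨j, Finset.mem_univ j, sq_pos_of_ne_zero hj⟩

theorem sq_sum_mul_sub_le {ι : Type*} [Fintype ι] {x y a : ι → ℝ} {r : ℝ}
    (hx : ∑ j, x j ^ 2 = r ^ 2) :
    (r ^ 2 * ∑ j, y j * a j - (∑ j, x j * a j) * ∑ j, x j * y j) ^ 2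
      ≤ r ^ 2 * (r ^ 2 * ∑ j, a j ^ 2 - (∑ j, x j * a j) ^ 2) * ∑ j, y j ^ 2 := by
  set α := ∑ j, x j * a j
  have hcs := Finset.sum_mul_sq_le_sq_mul_sq Finset.univ (fun j => r ^ 2 * a j - α * x j) y
  have hpair : ∑ j, (r ^ 2 * a j - α * x j) * y j
      = r ^ 2 * ∑ j, y j * a j - α * ∑ j, x j * y j := by
    simp only [sub_mul, Finset.sum_sub_distrib, Finset.mul_sum]
    congr 1 <;> exact Finset.sum_congr rfl fun j _ => by ring
  have hnorm : ∑ j, (r ^ 2 * a j - α * x j) ^ 2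
      = r ^ 2 * (r ^ 2 * ∑ j, a j ^ 2 - α ^ 2) := by
    have h : ∀ j, (r ^ 2 * a j - α * x j) ^ 2
        = r ^ 4 * a j ^ 2 - 2 * r ^ 2 * α * (x j * a j) + α ^ 2 * x j ^ 2 := fun j => by ring
    simp only [h, Finset.sum_add_distrib, Finset.sum_sub_distrib, ← Finset.mul_sum, hx]
    ring
  rwa [hpair, hnorm] at hcs

theorem one_add_sq_mul_le_of_orthogonality {ι : Type*} [Fintype ι] {x y a b : ι → ℝ}
    {r F m : ℝ} (hr : 0 < r) (hF : 0 < F)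
    (hx : ∑ j, x j ^ 2 = r ^ 2) (hy : ∑ j, y j ^ 2 = F ^ 2)
    (hb : r * ∑ j, y j * b j = F * m * ∑ j, x j * a j)
    (ha : r * ∑ j, y j * a j = -(F * m * ∑ j, x j * b j)) :
    (1 + m ^ 2) * ((∑ j, x j * a j) ^ 2 + (∑ j, x j * b j) ^ 2)
      ≤ r ^ 2 * (∑ j, a j ^ 2 + ∑ j, b j ^ 2) := by
  have hcs_a := sq_sum_mul_sub_le (y := y) (a := a) hx
  have hcs_b := sq_sum_mul_sub_le (y := y) (a := b) hx
  set α := ∑ j, x j * a j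
  set β := ∑ j, x j * b j
  set c := ∑ j, x j * y j
  rw [hy, show r ^ 2 * ∑ j, y j * a j = r * -(F * m * β) by rw [← ha]; ring] at hcs_a
  rw [hy, show r ^ 2 * ∑ j, y j * b j = r * (F * m * α) by rw [← hb]; ring] at hcs_b
  -- the cross terms cancel in the sum of the two Cauchy–Schwarz inequalities
  have hsum : (r * F) ^ 2 * ((1 + m ^ 2) * (α ^ 2 + β ^ 2)) + c ^ 2 * (α ^ 2 + β ^ 2)
      ≤ (r * F) ^ 2 * (r ^ 2 * (∑ j, a j ^ 2 + ∑ j, b j ^ 2)) := by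
    linear_combination hcs_a + hcs_b
  have hc : 0 ≤ c ^ 2 * (α ^ 2 + β ^ 2) := by positivity
  exact le_of_mul_le_mul_left (by linarith) (by positivity : 0 < (r * F) ^ 2)

section BilinDiag

variable {E : Type*} [NormedAddCommGroup E] [NormedSpace ℝ E] {B : E →L[ℝ] E →L[ℝ] ℝ}

theorem hasFDerivAt_bilin_diag (hB : ∀ u v, B u v = B v u) (z : E) :
    HasFDerivAt (fun z => B z z) ((2 : ℝ) • B z) z := by
  refine (B.hasFDerivAt_of_bilinear (hasFDerivAt_id z) (hasFDerivAt_id z)).congr_fderiv ?_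
  ext w
  simp [hB w z, two_mul]

theorem HasDerivAt.hasFDerivAt_smul_bilin_diag (hB : ∀ u v, B u v = B v u) {g : ℝ → ℝ} {d : ℝ}
    {p : E} (hg : HasDerivAt g d (B p p)) :
    HasFDerivAt (fun z => g (B z z) • (2 : ℝ) • B z)
      (g (B p p) • (2 : ℝ) • B + (d • (2 : ℝ) • B p).smulRight ((2 : ℝ) • B p)) p :=
  (hg.comp_hasFDerivAt (f := fun z => B z z) p (hasFDerivAt_bilin_diag hB p)).smul
    ((2 : ℝ) • B).hasFDerivAt

variable {A : E →L[ℝ] E →L[ℝ] ℝ} {φ φ' : ℝ → ℝ}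

theorem hasFDerivAt_sub_comp_bilin_diag (hA : ∀ u v, A u v = A v u)
    (hB : ∀ u v, B u v = B v u) {z : E} (hφ : HasDerivAt φ (φ' (B z z)) (B z z)) :
    HasFDerivAt (fun z => A z z - φ (B z z)) ((2 : ℝ) • A z - φ' (B z z) • (2 : ℝ) • B z) z :=
  (hasFDerivAt_bilin_diag hA z).sub
    (hφ.comp_hasFDerivAt (f := fun z => B z z) z (hasFDerivAt_bilin_diag hB z))

theorem iteratedFDeriv_two_sub_comp_bilin_diag_apply (hA : ∀ u v, A u v = A v u)
    (hB : ∀ u v, B u v = B v u) {p : E} {d : ℝ}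
    (hφ : ∀ᶠ s in 𝓝 (B p p), HasDerivAt φ (φ' s) s) (hφ' : HasDerivAt φ' d (B p p))
    (w₁ w₂ : E) :
    iteratedFDeriv ℝ 2 (fun z => A z z - φ (B z z)) p ![w₁, w₂]
      = 2 * A w₁ w₂ - (2 * φ' (B p p) * B w₁ w₂ + 4 * d * B p w₁ * B p w₂) := by
  have hfderiv : fderiv ℝ (fun z => A z z - φ (B z z))
      =ᶠ[𝓝 p] fun z => ((2 : ℝ) • A) z - φ' (B z z) • (2 : ℝ) • B z := by
    have hcont : Continuous fun z => B z z := by fun_prop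
    filter_upwards [(hcont.tendsto p).eventually hφ] with z hz
    exact (hasFDerivAt_sub_comp_bilin_diag hA hB hz).fderiv
  have h2 := ((2 : ℝ) • A).hasFDerivAt.fun_sub (hφ'.hasFDerivAt_smul_bilin_diag hB)
  rw [iteratedFDeriv_two_apply, hfderiv.fderiv_eq, h2.fderiv]
  simp
  ring

end BilinDiag

section ReImForms

variable (ι : Type*) [Fintype ι]

noncomputable def reForm : (ι → ℂ) →L[ℝ] (ι → ℂ) →L[ℝ] ℝ :=
  ∑ j, (reCLM.comp (ContinuousLinearMap.proj j)).smulRight (reCLM.comp (ContinuousLinearMap.proj j))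

noncomputable def imForm : (ι → ℂ) →L[ℝ] (ι → ℂ) →L[ℝ] ℝ :=
  ∑ j, (imCLM.comp (ContinuousLinearMap.proj j)).smulRight (imCLM.comp (ContinuousLinearMap.proj j))

variable {ι}

@[simp]
theorem reForm_apply (z w : ι → ℂ) : reForm ι z w = ∑ j, (z j).re * (w j).re := by
  simp [reForm]

@[simp]
theorem imForm_apply (z w : ι → ℂ) : imForm ι z w = ∑ j, (z j).im * (w j).im := by
  simp [imForm]

theorem reForm_comm (z w : ι → ℂ) : reForm ι z w = reForm ι w z := by
  simp only [reForm_apply, mul_comm]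

theorem imForm_comm (z w : ι → ℂ) : imForm ι z w = imForm ι w z := by
  simp only [imForm_apply, mul_comm]

end ReImForms

theorem HasDerivAt.comp_sqrt {g : ℝ → ℝ} {g' s : ℝ} (hg : HasDerivAt g g' (Real.sqrt s))
    (hs : 0 < s) : HasDerivAt (fun s => g (Real.sqrt s)) (g' / (2 * Real.sqrt s)) s := by
  refine (hg.comp s (Real.hasDerivAt_sqrt hs.ne')).congr_deriv ?_
  ring

theorem hasDerivAt_sq_comp_sqrt {f : ℝ → ℝ} {s : ℝ} (hf : DifferentiableAt ℝ f (Real.sqrt s))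
    (hs : 0 < s) :
    HasDerivAt (fun s => f (Real.sqrt s) ^ 2)
      (f (Real.sqrt s) * deriv f (Real.sqrt s) / Real.sqrt s) s := by
  refine ((hf.hasDerivAt.fun_pow 2).comp_sqrt hs).congr_deriv ?_
  have : Real.sqrt s ≠ 0 := (Real.sqrt_pos.2 hs).ne'
  field_simp
  ring

theorem hasDerivAt_mul_deriv_div_comp_sqrt {f : ℝ → ℝ} {s : ℝ}
    (hf : DifferentiableAt ℝ f (Real.sqrt s)) (hf' : DifferentiableAt ℝ (deriv f) (Real.sqrt s))
    (hs : 0 < s) :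
    HasDerivAt (fun s => f (Real.sqrt s) * deriv f (Real.sqrt s) / Real.sqrt s)
      (((deriv f (Real.sqrt s) ^ 2 + f (Real.sqrt s) * deriv (deriv f) (Real.sqrt s))
          * Real.sqrt s - f (Real.sqrt s) * deriv f (Real.sqrt s))
        / Real.sqrt s ^ 2 / (2 * Real.sqrt s)) s := by
  have hr : Real.sqrt s ≠ 0 := (Real.sqrt_pos.2 hs).ne'
  refine (((hf.hasDerivAt.mul hf'.hasDerivAt).div (hasDerivAt_id _) hr).comp_sqrt hs).congr_deriv ?_
  simp only [id, mul_one, pow_two, Pi.mul_apply]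

theorem eventually_hasDerivAt_sq_comp_sqrt {f : ℝ → ℝ} {V : Set ℝ} (hV : IsOpen V)
    (hf : DifferentiableOn ℝ f V) {s₀ : ℝ} (hs₀ : 0 < s₀) (hs₀V : Real.sqrt s₀ ∈ V) :
    ∀ᶠ s in 𝓝 s₀, HasDerivAt (fun s => f (Real.sqrt s) ^ 2)
      (f (Real.sqrt s) * deriv f (Real.sqrt s) / Real.sqrt s) s := by
  have hW : IsOpen {s : ℝ | 0 < s ∧ Real.sqrt s ∈ V} :=
    isOpen_Ioi.inter (hV.preimage Real.continuous_sqrt)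
  filter_upwards [hW.mem_nhds ⟨hs₀, hs₀V⟩] with s hs
  exact hasDerivAt_sq_comp_sqrt (hf.differentiableAt (hV.mem_nhds hs.2)) hs.1

theorem rhoF_eq (n : ℕ) (f : ℝ → ℝ) :
    rhoF n f = fun z => imForm (Fin n) z z - f (Real.sqrt (reForm (Fin n) z z)) ^ 2 := by
  funext z
  simp [rhoF, pow_two]

section Rho

variable {n : ℕ} {f : ℝ → ℝ} {V : Set ℝ} {p : Fin n → ℂ} {r : ℝ}

theorem fderiv_rhoF_apply_s7 (hV : IsOpen V) (hf : DifferentiableOn ℝ f V) (hr : 0 < r)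
    (hpr : ∑ j, (p j).re ^ 2 = r ^ 2) (hrV : r ∈ V) (w : Fin n → ℂ) :
    fderiv ℝ (rhoF n f) p w = 2 * ∑ j, (p j).im * (w j).im
      - f r * deriv f r / r * (2 * ∑ j, (p j).re * (w j).re) := by
  have hpp : reForm (Fin n) p p = r ^ 2 := by simpa [← pow_two] using hpr
  have hsqrt : Real.sqrt (reForm (Fin n) p p) = r := by rw [hpp, Real.sqrt_sq hr.le]
  have hφ := hasDerivAt_sq_comp_sqrt (f := f) (s := reForm (Fin n) p p)
    (hf.differentiableAt (hV.mem_nhds (hsqrt ▸ hrV))) (by rw [hpp]; positivity)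
  rw [rhoF_eq, (hasFDerivAt_sub_comp_bilin_diag (φ := fun s => f (Real.sqrt s) ^ 2)
    (φ' := fun s => f (Real.sqrt s) * deriv f (Real.sqrt s) / Real.sqrt s)
    imForm_comm reForm_comm hφ).fderiv]
  simp only [hsqrt]
  simp

theorem iteratedFDeriv_two_rhoF_apply_s7 (hV : IsOpen V) (hf : ContDiffOn ℝ 2 f V) (hr : 0 < r)
    (hpr : ∑ j, (p j).re ^ 2 = r ^ 2) (hrV : r ∈ V) (w₁ w₂ : Fin n → ℂ) :
    iteratedFDeriv ℝ 2 (rhoF n f) p ![w₁, w₂] = 2 * ∑ j, (w₁ j).im * (w₂ j).im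
      - (2 * (f r * deriv f r / r) * ∑ j, (w₁ j).re * (w₂ j).re
        + 4 * (((deriv f r ^ 2 + f r * deriv (deriv f) r) * r - f r * deriv f r) / r ^ 2 / (2 * r))
          * (∑ j, (p j).re * (w₁ j).re) * ∑ j, (p j).re * (w₂ j).re) := by
  have hpp : reForm (Fin n) p p = r ^ 2 := by simpa [← pow_two] using hpr
  have hsqrt : Real.sqrt (reForm (Fin n) p p) = r := by rw [hpp, Real.sqrt_sq hr.le]
  have hφ := eventually_hasDerivAt_sq_comp_sqrt hV (hf.differentiableOn (by norm_num))
    (by rw [hpp]; positivity) (hsqrt ▸ hrV)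
  have hφ' := hasDerivAt_mul_deriv_div_comp_sqrt (s := reForm (Fin n) p p)
    ((hf.contDiffAt (hV.mem_nhds (hsqrt ▸ hrV))).differentiableAt (by norm_num))
    (((hf.deriv_of_isOpen hV (by norm_num)).contDiffAt (hV.mem_nhds (hsqrt ▸ hrV))).differentiableAt
      one_ne_zero) (by rw [hpp]; positivity)
  rw [rhoF_eq, iteratedFDeriv_two_sub_comp_bilin_diag_apply imForm_comm reForm_comm hφ hφ']
  simp only [hsqrt]
  simp

theorem complexTangent_rhoF (hV : IsOpen V) (hf : DifferentiableOn ℝ f V) (hr : 0 < r)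
    (hpr : ∑ j, (p j).re ^ 2 = r ^ 2) (hrV : r ∈ V) {v : Fin n → ℂ}
    (hv : v ∈ complexTangent (rhoF n f) p) :
    r * ∑ j, (p j).im * (v j).im = f r * deriv f r * ∑ j, (p j).re * (v j).re ∧
      r * ∑ j, (p j).im * (v j).re = -(f r * deriv f r * ∑ j, (p j).re * (v j).im) := by
  obtain ⟨h₁, h₂⟩ := hv
  rw [fderiv_rhoF_apply_s7 hV hf hr hpr hrV] at h₁ h₂
  simp only [Pi.smul_apply, smul_eq_mul, mul_re, mul_im, I_re, I_im, zero_mul, one_mul, zero_sub,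
    zero_add, mul_neg, Finset.sum_neg_distrib] at h₂
  field_simp at h₁ h₂
  constructor
  · linear_combination h₁ / 2
  · linear_combination h₂ / 2

theorem leviForm_rhoF_eq (hV : IsOpen V) (hf : ContDiffOn ℝ 2 f V) (hr : 0 < r)
    (hpr : ∑ j, (p j).re ^ 2 = r ^ 2) (hrV : r ∈ V)
    (hode : f r * (deriv (deriv f) r + deriv f r ^ 3 / r) = 1) (v : Fin n → ℂ) :
    leviForm (rhoF n f) p v = (1 - f r * deriv f r / r) / 2 *
      (∑ j, (v j).re ^ 2 + ∑ j, (v j).im ^ 2 - (1 + deriv f r ^ 2) *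
        ((∑ j, (p j).re * (v j).re) ^ 2 + (∑ j, (p j).re * (v j).im) ^ 2) / r ^ 2) := by
  have hχ : ((deriv f r ^ 2 + f r * deriv (deriv f) r) * r - f r * deriv f r) / r ^ 2 / (2 * r)
      = (1 - f r * deriv f r / r) * (1 + deriv f r ^ 2) / (2 * r ^ 2) := by
    field_simp
    field_simp at hode
    linear_combination hode
  rw [leviForm, iteratedFDeriv_two_rhoF_apply_s7 hV hf hr hpr hrV,
    iteratedFDeriv_two_rhoF_apply_s7 hV hf hr hpr hrV, hχ]
  simp only [Pi.smul_apply, smul_eq_mul, mul_re, mul_im, I_re, I_im, zero_mul, one_mul, zero_sub,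
    zero_add, mul_neg, Finset.sum_neg_distrib, neg_mul, neg_neg, ← pow_two]
  field_simp
  ring

theorem leviForm_rhoF_eq_mul_nonneg {v : Fin n → ℂ} (hV : IsOpen V) (hf : ContDiffOn ℝ 2 f V)
    (hr : 0 < r) (hpr : ∑ j, (p j).re ^ 2 = r ^ 2) (hrV : r ∈ V) (hfr : 0 < f r)
    (hpi : ∑ j, (p j).im ^ 2 = f r ^ 2)
    (hode : f r * (deriv (deriv f) r + deriv f r ^ 3 / r) = 1)
    (hv : v ∈ complexTangent (rhoF n f) p) :
    ∃ B, 0 ≤ B ∧ leviForm (rhoF n f) p v = (1 - f r * deriv f r / r) * B := by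
  obtain ⟨hb, ha⟩ := complexTangent_rhoF hV (hf.differentiableOn (by norm_num)) hr hpr hrV hv
  have hle := one_add_sq_mul_le_of_orthogonality (x := fun j => (p j).re) (y := fun j => (p j).im)
    (a := fun j => (v j).re) (b := fun j => (v j).im) hr hfr hpr hpi hb ha
  refine ⟨_, ?_, (leviForm_rhoF_eq hV hf hr hpr hrV hode v).trans (mul_comm_div _ _ _)⟩
  refine div_nonneg (sub_nonneg.2 ?_) zero_le_two
  rw [div_le_iff₀ (by positivity)]
  linarith

end Rho

theorem stmt_7_general {n : ℕ}
    (U : Set (Fin n → ℝ))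
    (hU0 : (0 : Fin n → ℝ) ∉ U)
    (f : ℝ → ℝ) (V : Set ℝ) (hV : IsOpen V)
    (hIV : {t : ℝ | ∃ x ∈ U, t = Real.sqrt (∑ j, x j ^ 2)} ⊆ V)
    (hf : ContDiffOn ℝ 2 f V)
    (hfpos : ∀ t ∈ {t : ℝ | ∃ x ∈ U, t = Real.sqrt (∑ j, x j ^ 2)}, 0 < f t)
    (hode : ∀ t ∈ {t : ℝ | ∃ x ∈ U, t = Real.sqrt (∑ j, x j ^ 2)},
      f t * (deriv (deriv f) t + (deriv f t) ^ 3 / t) = 1) :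
    ((∀ t ∈ {t : ℝ | ∃ x ∈ U, t = Real.sqrt (∑ j, x j ^ 2)}, f t * deriv f t / t < 1) →
      ∀ p ∈ SigmaSetF n U f, ∀ v ∈ complexTangent (rhoF n f) p,
        0 ≤ leviForm (rhoF n f) p v) ∧
    ((∀ t ∈ {t : ℝ | ∃ x ∈ U, t = Real.sqrt (∑ j, x j ^ 2)}, 1 < f t * deriv f t / t) →
      ∀ p ∈ SigmaSetF n U f, ∀ v ∈ complexTangent (rhoF n f) p,
        leviForm (rhoF n f) p v ≤ 0) := by
  have key : ∀ p ∈ SigmaSetF n U f, ∀ v ∈ complexTangent (rhoF n f) p,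
      ∃ t ∈ {t : ℝ | ∃ x ∈ U, t = Real.sqrt (∑ j, x j ^ 2)}, ∃ B, 0 ≤ B ∧
        leviForm (rhoF n f) p v = (1 - f t * deriv f t / t) * B := by
    rintro p ⟨hpU, hpS⟩ v hv
    set r := Real.sqrt (∑ j, (p j).re ^ 2)
    have hrI : r ∈ {t : ℝ | ∃ x ∈ U, t = Real.sqrt (∑ j, x j ^ 2)} := ⟨_, hpU, rfl⟩
    have hre : 0 < ∑ j, (p j).re ^ 2 :=
      sum_sq_pos_of_ne_zero (x := fun j => (p j).re) fun h => hU0 (h ▸ hpU)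
    have hpr : ∑ j, (p j).re ^ 2 = r ^ 2 := (Real.sq_sqrt hre.le).symm
    have hpi : ∑ j, (p j).im ^ 2 = f r ^ 2 := by
      rw [← hpS, Real.sq_sqrt (Finset.sum_nonneg fun j _ => sq_nonneg _)]
    exact ⟨r, hrI, leviForm_rhoF_eq_mul_nonneg hV hf (Real.sqrt_pos.2 hre) hpr (hIV hrI)
      (hfpos r hrI) hpi (hode r hrI) hv⟩
  refine ⟨fun hlt p hp v hv => ?_, fun hgt p hp v hv => ?_⟩
  · obtain ⟨t, ht, B, hB, hL⟩ := key p hp v hv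
    exact hL ▸ mul_nonneg (sub_nonneg.2 (hlt t ht).le) hB
  · obtain ⟨t, ht, B, hB, hL⟩ := key p hp v hv
    exact hL ▸ mul_nonpos_of_nonpos_of_nonneg (sub_nonpos.2 (hgt t ht).le) hB

theorem stmt_7 {n : ℕ} (hn : 1 < n)
    (U : Set (Fin n → ℝ)) (hUne : U.Nonempty) (hUopen : IsOpen U)
    (hU0 : (0 : Fin n → ℝ) ∉ U)
    (hUinv : ∀ x x' : Fin n → ℝ, x ∈ U → (∑ j, x' j ^ 2) = (∑ j, x j ^ 2) → x' ∈ U)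
    (f : ℝ → ℝ) (V : Set ℝ) (hV : IsOpen V)
    (hIV : {t : ℝ | ∃ x ∈ U, t = Real.sqrt (∑ j, x j ^ 2)} ⊆ V)
    (hf : ContDiffOn ℝ 2 f V)
    (hfpos : ∀ t ∈ {t : ℝ | ∃ x ∈ U, t = Real.sqrt (∑ j, x j ^ 2)}, 0 < f t)
    (hode : ∀ t ∈ {t : ℝ | ∃ x ∈ U, t = Real.sqrt (∑ j, x j ^ 2)},
      f t * (deriv (deriv f) t + (deriv f t) ^ 3 / t) = 1) :
    ((∀ t ∈ {t : ℝ | ∃ x ∈ U, t = Real.sqrt (∑ j, x j ^ 2)}, f t * deriv f t / t < 1) →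
      ∀ p ∈ SigmaSetF n U f, ∀ v ∈ complexTangent (rhoF n f) p,
        0 ≤ leviForm (rhoF n f) p v) ∧
    ((∀ t ∈ {t : ℝ | ∃ x ∈ U, t = Real.sqrt (∑ j, x j ^ 2)}, 1 < f t * deriv f t / t) →
      ∀ p ∈ SigmaSetF n U f, ∀ v ∈ complexTangent (rhoF n f) p,
        leviForm (rhoF n f) p v ≤ 0) :=
  stmt_7_general U hU0 f V hV hIV hf hfpos hode
end

section
/- Let θ be a C² function on an open interval J ⊂ (0,∞) with positive values and θ'(s) > 0 for all s ∈ J, and let τ = θ⁻¹ be its inverse function, defined on θ(J). Then for every s ∈ J, writing u = θ(s), the conditions [θ'(s) < 1 and 2 s θ(s) θ''(s) < (1 − θ'(s)) (s θ'(s)² + θ(s))] hold if and only if the conditions [τ'(u) > 1 and 2 u τ(u) τ''(u) > (1 − τ'(u)) (u τ'(u)² + τ(u))] hold. -/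
/-!
Differentiating the identity `τ (θ x) = x` once and twice gives `τ'(u) θ'(s) = 1` and
`τ''(u) θ'(s)² + τ'(u) θ''(s) = 0` at `u = θ s`. Hence `τ'(u) = 1 / θ'(s)` and
`τ''(u) = -θ''(s) / θ'(s)³`, and multiplying the second condition on `τ` by `θ'(s)³ > 0` turns it
into the second condition on `θ`.
-/

open Set Filter Topology

theorem deriv_comp_mul_deriv_eq_one {f g : ℝ → ℝ} {x : ℝ} (hinv : ∀ᶠ y in 𝓝 x, g (f y) = y)
    (hg : DifferentiableAt ℝ g (f x)) (hf : DifferentiableAt ℝ f x) :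
    deriv g (f x) * deriv f x = 1 :=
  (hg.hasDerivAt.comp x hf.hasDerivAt).unique ((hasDerivAt_id x).congr_of_eventuallyEq hinv)

theorem deriv_deriv_comp_mul_sq_add_eq_zero {f g : ℝ → ℝ} {x : ℝ}
    (hinv : ∀ᶠ y in 𝓝 x, g (f y) = y) (hg : ContDiffAt ℝ 2 g (f x)) (hf : ContDiffAt ℝ 2 f x) :
    deriv (deriv g) (f x) * deriv f x ^ 2 + deriv g (f x) * deriv (deriv f) x = 0 := by
  have hf₁ : DifferentiableAt ℝ f x := hf.differentiableAt two_ne_zero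
  have hg_near : ∀ᶠ y in 𝓝 x, ContDiffAt ℝ 2 g (f y) :=
    hf₁.continuousAt.eventually (hg.eventually (by simp))
  have hg' : DifferentiableAt ℝ (deriv g) (f x) :=
    (hg.derivWithin (m := 1) le_rfl).differentiableAt one_ne_zero
  have hf' : DifferentiableAt ℝ (deriv f) x :=
    (hf.derivWithin (m := 1) le_rfl).differentiableAt one_ne_zero
  have h_prod : HasDerivAt (fun y ↦ deriv g (f y) * deriv f y)
      (deriv (deriv g) (f x) * deriv f x * deriv f x + deriv g (f x) * deriv (deriv f) x) x :=
    (hg'.hasDerivAt.comp x hf₁.hasDerivAt).mul hf'.hasDerivAt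
  have h_const : HasDerivAt (fun y ↦ deriv g (f y) * deriv f y) 0 x := by
    refine (hasDerivAt_const x 1).congr_of_eventuallyEq ?_
    filter_upwards [hinv.eventually_nhds, hg_near, hf.eventually (by simp)] with y hy hgy hfy
    exact deriv_comp_mul_deriv_eq_one hy (hgy.differentiableAt two_ne_zero)
      (hfy.differentiableAt two_ne_zero)
  linear_combination h_prod.unique h_const

theorem lt_one_and_lt_iff_one_lt_and_lt_of_mul_eq_one {p q r r₂ s T : ℝ} (hp : 0 < p)
    (h₁ : r * p = 1) (h₂ : r₂ * p ^ 2 + r * q = 0) :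
    (p < 1 ∧ 2 * s * T * q < (1 - p) * (s * p ^ 2 + T)) ↔
      (1 < r ∧ (1 - r) * (T * r ^ 2 + s) < 2 * T * s * r₂) := by
  have hr : r = p⁻¹ := eq_inv_of_mul_eq_one_left h₁
  have hscaled : p ^ 3 * (2 * T * s * r₂ - (1 - r) * (T * r ^ 2 + s)) =
      (1 - p) * (s * p ^ 2 + T) - 2 * s * T * q := by
    -- after `h₂`, the rest is `T ((w³ - 1) - p (w² - 1)) + s p² (w - 1)` with `w = r p`
    linear_combination (2 * T * s * p) * h₂ +
      (-2 * T * s * q + T * ((r * p) ^ 2 + r * p + 1 - p * (r * p + 1)) + s * p ^ 2) * h₁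
  refine and_congr (by rw [hr, one_lt_inv₀ hp]) ?_
  rw [← sub_pos, ← sub_pos (a := 2 * T * s * r₂), ← hscaled, mul_pos_iff_of_pos_left (pow_pos hp 3)]

theorem stmt_9_general (a b : ℝ) (θ τ : ℝ → ℝ)
    (hθ : ContDiffOn ℝ 2 θ (Ioo a b))
    (hθ' : ∀ s ∈ Ioo a b, 0 < deriv θ s)
    (hinv : ∀ s ∈ Ioo a b, τ (θ s) = s)
    (hopen : IsOpen (θ '' Ioo a b))
    (hτ : ContDiffOn ℝ 2 τ (θ '' Ioo a b)) :
    ∀ s ∈ Ioo a b,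
      ((deriv θ s < 1 ∧
          2 * s * θ s * deriv (deriv θ) s <
            (1 - deriv θ s) * (s * (deriv θ s) ^ 2 + θ s))
        ↔ (1 < deriv τ (θ s) ∧
          (1 - deriv τ (θ s)) * (θ s * (deriv τ (θ s)) ^ 2 + τ (θ s)) <
            2 * θ s * τ (θ s) * deriv (deriv τ) (θ s))) := by
  intro s hs
  have hinv_near : ∀ᶠ y in 𝓝 s, τ (θ y) = y := eventually_of_mem (isOpen_Ioo.mem_nhds hs) hinv
  have hθs : ContDiffAt ℝ 2 θ s := hθ.contDiffAt (isOpen_Ioo.mem_nhds hs)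
  have hτs : ContDiffAt ℝ 2 τ (θ s) := hτ.contDiffAt (hopen.mem_nhds (mem_image_of_mem θ hs))
  rw [hinv s hs]
  exact lt_one_and_lt_iff_one_lt_and_lt_of_mul_eq_one (hθ' s hs)
    (deriv_comp_mul_deriv_eq_one hinv_near (hτs.differentiableAt two_ne_zero)
      (hθs.differentiableAt two_ne_zero))
    (deriv_deriv_comp_mul_sq_add_eq_zero hinv_near hτs hθs)

theorem stmt_9 (a b : ℝ) (ha : 0 ≤ a) (θ τ : ℝ → ℝ)
    (hθ : ContDiffOn ℝ 2 θ (Ioo a b))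
    (hθpos : ∀ s ∈ Ioo a b, 0 < θ s)
    (hθ' : ∀ s ∈ Ioo a b, 0 < deriv θ s)
    (hinv : ∀ s ∈ Ioo a b, τ (θ s) = s)
    (hopen : IsOpen (θ '' Ioo a b))
    (hτ : ContDiffOn ℝ 2 τ (θ '' Ioo a b)) :
    ∀ s ∈ Ioo a b,
      ((deriv θ s < 1 ∧
          2 * s * θ s * deriv (deriv θ) s <
            (1 - deriv θ s) * (s * (deriv θ s) ^ 2 + θ s))
        ↔ (1 < deriv τ (θ s) ∧
          (1 - deriv τ (θ s)) * (θ s * (deriv τ (θ s)) ^ 2 + τ (θ s)) <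
            2 * θ s * τ (θ s) * deriv (deriv τ) (θ s))) :=
  stmt_9_general a b θ τ hθ hθ' hinv hopen hτ
end
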